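/- Let d ≥ 1, n₁,…,n_d ≥ 1, n = n₁+…+n_d, and let f ∈ L¹_loc(ℝⁿ). Then f has finite little bmo norm if and only if there is a constant C such that for every i = 1,…,d and almost every choice of the variables (x_j)_{j≠i}, the one-variable function x_i ↦ f(x₁,…,x_d) has one-parameter BMO(ℝ^{nᵢ}) norm at most C. Moreover the two quantities are equivalent: the least such C satisfies C ≤ c·‖f‖_bmo and ‖f‖_bmo ≤ c·C for a constant c depending only on d. -/

import Mathlib

open MeasureTheory ENNReal Filter

noncomputable section

/-- A dyadic cube in `ℝ^m`, recorded by its generation `k` and its corner index `j`;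
it represents the set `∏ i, [j i * 2^k, (j i + 1) * 2^k)`. -/
structure DyadicCube (m : ℕ) where
  k : ℤ
  j : Fin m → ℤ

/-- The underlying set of a dyadic cube. -/
def dyadicCubeSet {m : ℕ} (c : DyadicCube m) : Set (Fin m → ℝ) :=
  {x | ∀ i, (c.j i : ℝ) * 2 ^ c.k ≤ x i ∧ x i < ((c.j i : ℝ) + 1) * 2 ^ c.k}

/-- The generation-`k` dyadic cube containing the point `x`. -/
def dyadicCubeOf {m : ℕ} (k : ℤ) (x : Fin m → ℝ) : DyadicCube m :=
  ⟨k, fun i => ⌊x i / 2 ^ k⌋⟩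

/-- `E_k f x`: the average of `f` over the generation-`k` dyadic cube containing `x`. -/
def Ek {m : ℕ} (k : ℤ) (f : (Fin m → ℝ) → ℝ) (x : Fin m → ℝ) : ℝ :=
  ⨍ y in dyadicCubeSet (dyadicCubeOf k x), f y

/-- The martingale difference operator `Δ_Q f = (E_{k-1} f - E_k f) · 1_Q`
for a dyadic cube `Q` of generation `k`. -/
def deltaQ {m : ℕ} (c : DyadicCube m) (f : (Fin m → ℝ) → ℝ) : (Fin m → ℝ) → ℝ :=
  (dyadicCubeSet c).indicator (fun y => Ek (c.k - 1) f y - Ek c.k f y)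

/-- The product space `ℝ^{n 0} × ⋯ × ℝ^{n (d-1)}`. -/
abbrev ProductSpace {d : ℕ} (n : Fin d → ℕ) : Type := ∀ i, (Fin (n i) → ℝ)

/-- A dyadic rectangle `R = Q₁ × ⋯ × Q_d`, one dyadic cube in each block. -/
abbrev DyadicRect {d : ℕ} (n : Fin d → ℕ) : Type := ∀ i, DyadicCube (n i)

/-- The underlying set of a dyadic rectangle. -/
def dyadicRectSet {d : ℕ} {n : Fin d → ℕ} (R : DyadicRect n) : Set (ProductSpace n) :=
  {x | ∀ i, x i ∈ dyadicCubeSet (R i)}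

/-- Apply the one-parameter operator `Δ_Q` in the `i`-th block of variables. -/
def deltaBlock {d : ℕ} {n : Fin d → ℕ} (i : Fin d) (c : DyadicCube (n i))
    (f : ProductSpace n → ℝ) (x : ProductSpace n) : ℝ :=
  deltaQ c (fun y => f (Function.update x i y)) (x i)

/-- The multiparameter difference operator `Δ_R = Δ_{Q₁} ⊗ ⋯ ⊗ Δ_{Q_d}`, obtained
by applying `Δ_{Q_i}` in the `i`-th block of variables. -/
def deltaR {d : ℕ} {n : Fin d → ℕ} (R : DyadicRect n) (f : ProductSpace n → ℝ) :
    ProductSpace n → ℝ :=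
  (List.finRange d).foldr (fun i g => deltaBlock i (R i) g) f

/-- The squared `L²` norm `‖g‖_{L²}²`, as an extended nonnegative real. -/
def l2normSq {d : ℕ} {n : Fin d → ℕ} (g : ProductSpace n → ℝ) : ℝ≥0∞ :=
  ∫⁻ x, ENNReal.ofReal (g x ^ 2)

/-- The multiparameter dyadic square function `S f (x) = (∑_R |Δ_R f(x)|²)^{1/2}`. -/
def squareFn {d : ℕ} {n : Fin d → ℕ} (f : ProductSpace n → ℝ) (x : ProductSpace n) : ℝ≥0∞ :=
  (∑' R : DyadicRect n, ENNReal.ofReal (deltaR R f x ^ 2)) ^ (1 / 2 : ℝ)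

/-- The dyadic product `H¹` norm `‖S f‖_{L¹}`. -/
def H1Norm {d : ℕ} {n : Fin d → ℕ} (f : ProductSpace n → ℝ) : ℝ≥0∞ :=
  ∫⁻ x, squareFn f x

/-- An axis-parallel cube in `ℝ^m` with arbitrary corner and (positive) side length. -/
structure Cube (m : ℕ) where
  corner : Fin m → ℝ
  side : ℝ
  side_pos : 0 < side

/-- The underlying set of a cube. -/
def cubeSet {m : ℕ} (c : Cube m) : Set (Fin m → ℝ) :=
  {x | ∀ i, c.corner i ≤ x i ∧ x i < c.corner i + c.side}

/-- A rectangle `R = Q₁ × ⋯ × Q_d`: an axis-parallel cube in each block. -/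
abbrev Rect {d : ℕ} (n : Fin d → ℕ) : Type := ∀ i, Cube (n i)

/-- The underlying set of a rectangle. -/
def rectSet {d : ℕ} {n : Fin d → ℕ} (R : Rect n) : Set (ProductSpace n) :=
  {x | ∀ i, x i ∈ cubeSet (R i)}

/-- The little `bmo` norm: `sup_R |R|⁻¹ ∫_R |f - f_R|` over all rectangles. -/
def bmo1 {d : ℕ} {n : Fin d → ℕ} (f : ProductSpace n → ℝ) : ℝ≥0∞ :=
  ⨆ R : Rect n,
    (volume (rectSet R))⁻¹ * ∫⁻ x in rectSet R, ENNReal.ofReal |f x - ⨍ y in rectSet R, f y|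

/-- The `L²`-based little `bmo` norm: `sup_R (|R|⁻¹ ∫_R |f - f_R|²)^{1/2}` over all
rectangles. -/
def bmo2 {d : ℕ} {n : Fin d → ℕ} (f : ProductSpace n → ℝ) : ℝ≥0∞ :=
  ⨆ R : Rect n,
    ((volume (rectSet R))⁻¹ *
      ∫⁻ x in rectSet R, ENNReal.ofReal ((f x - ⨍ y in rectSet R, f y) ^ 2)) ^ (1 / 2 : ℝ)

/-- The one-parameter `BMO` norm over all axis-parallel cubes in `ℝ^m`. -/
def bmo1Cube {m : ℕ} (g : (Fin m → ℝ) → ℝ) : ℝ≥0∞ :=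
  ⨆ Q : Cube m,
    (volume (cubeSet Q))⁻¹ * ∫⁻ x in cubeSet Q, ENNReal.ofReal |g x - ⨍ y in cubeSet Q, g y|

/-- The `L²`-based one-parameter `BMO` norm over all axis-parallel cubes in `ℝ^m`. -/
def bmo2Cube {m : ℕ} (g : (Fin m → ℝ) → ℝ) : ℝ≥0∞ :=
  ⨆ Q : Cube m,
    ((volume (cubeSet Q))⁻¹ *
      ∫⁻ x in cubeSet Q, ENNReal.ofReal ((g x - ⨍ y in cubeSet Q, g y) ^ 2)) ^ (1 / 2 : ℝ)

/-- The strong maximal function: supremum of averages of `|f|` over all rectangles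
containing the point. -/
def strongMaximal {d : ℕ} {n : Fin d → ℕ} (f : ProductSpace n → ℝ) (x : ProductSpace n) :
    ℝ≥0∞ :=
  ⨆ (R : Rect n) (_ : x ∈ rectSet R),
    (volume (rectSet R))⁻¹ * ∫⁻ y in rectSet R, ENNReal.ofReal |f y|

end

/-!
If `f` has bounded mean oscillation on rectangles, average over a rectangle `R` the mean
oscillations of the `i`-th slices of `f` on a cube `Q`. By Fubini in the `i`-th block this is an
average of `|f - f_{R'}|` over the rectangle `R'` obtained from `R` by replacing its `i`-th side
with `Q`, hence at most `2 ‖f‖_bmo`. Lebesgue differentiation along rectangles turns this into an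
a.e. bound, simultaneously for the countably many rational cubes, and every cube sits in a rational
one of at most `2^{nᵢ}` times its volume.

Conversely, averaging `f` over the sides of `R` one block at a time ends in a constant, and by
Fubini each step moves `f` in `L¹(R)` by at most the slice bound times `|R|`; so the mean
oscillation of `f` on `R` is at most `2d` times the slice bound.
-/

open Function Set

section MeanOscillation

variable {α : Type*} [MeasurableSpace α] {μ : Measure α} {s : Set α}

/-- `bmo1` and `bmo1Cube` are, by definition, suprema of `meanOsc` over rectangles and cubes. -/
noncomputable def meanOsc (μ : Measure α) (s : Set α) (g : α → ℝ) : ℝ≥0∞ :=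
  (μ s)⁻¹ * ∫⁻ x in s, ENNReal.ofReal |g x - ⨍ y in s, g y ∂μ| ∂μ

theorem mul_meanOsc (h0 : μ s ≠ 0) (hs : μ s ≠ ∞) (g : α → ℝ) :
    μ s * meanOsc μ s g = ∫⁻ x in s, ENNReal.ofReal |g x - ⨍ y in s, g y ∂μ| ∂μ := by
  rw [meanOsc, ← mul_assoc, ENNReal.mul_inv_cancel h0 hs, one_mul]

/-- No integrability is needed: if `g₁ - g₂` is not integrable on `s` the right side is `∞`, and
if it is, then `g₁` and `g₂` are both integrable or both have the junk average `0`. -/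
theorem ofReal_abs_setAverage_sub_le (hs : μ s ≠ ∞) {g₁ g₂ : α → ℝ}
    (hg₁ : AEStronglyMeasurable g₁ (μ.restrict s)) (hg₂ : AEStronglyMeasurable g₂ (μ.restrict s)) :
    ENNReal.ofReal |(⨍ x in s, g₁ x ∂μ) - ⨍ x in s, g₂ x ∂μ|
      ≤ (μ s)⁻¹ * ∫⁻ x in s, ENNReal.ofReal |g₁ x - g₂ x| ∂μ := by
  by_cases h₁₂ : IntegrableOn (fun x => g₁ x - g₂ x) s μ
  · by_cases h₁ : IntegrableOn g₁ s μ
    · have h₂ : IntegrableOn g₂ s μ := (h₁.sub h₁₂).congr (ae_of_all _ fun x => by simp)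
      rw [setAverage_eq, setAverage_eq, ← smul_sub, ← integral_sub h₁ h₂, smul_eq_mul, abs_mul,
        ENNReal.ofReal_mul (abs_nonneg _), abs_inv, abs_of_nonneg measureReal_nonneg]
      gcongr
      · rw [measureReal_def, ← ENNReal.toReal_inv]
        exact ENNReal.ofReal_toReal_le
      · simpa [Real.enorm_eq_ofReal_abs] using enorm_integral_le_lintegral_enorm
          (fun x => g₁ x - g₂ x) (μ := μ.restrict s)
    · have h₂ : ¬ IntegrableOn g₂ s μ := fun h₂ =>
        h₁ ((h₁₂.add h₂).congr (ae_of_all _ fun x => by simp))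
      simp [setAverage_eq, integral_undef h₁, integral_undef h₂]
  · have htop : ∫⁻ x in s, ENNReal.ofReal |g₁ x - g₂ x| ∂μ = ∞ := by
      by_contra h
      refine h₁₂ ⟨hg₁.sub hg₂, hasFiniteIntegral_iff_enorm.2 ?_⟩
      simpa [Real.enorm_eq_ofReal_abs] using lt_top_iff_ne_top.2 h
    simp [htop, ENNReal.mul_top, hs]

theorem meanOsc_le_two_mul (h0 : μ s ≠ 0) (hs : μ s ≠ ∞) {g : α → ℝ}
    (hg : AEStronglyMeasurable g (μ.restrict s)) (a : ℝ) :
    meanOsc μ s g ≤ 2 * ((μ s)⁻¹ * ∫⁻ x in s, ENNReal.ofReal |g x - a| ∂μ) := by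
  set A := (μ s)⁻¹ * ∫⁻ x in s, ENNReal.ofReal |g x - a| ∂μ
  have havg : ENNReal.ofReal |(⨍ y in s, g y ∂μ) - a| ≤ A := by
    simpa [setAverage_const h0 hs] using
      ofReal_abs_setAverage_sub_le hs hg (aestronglyMeasurable_const (b := a))
  have hpt : ∀ x, ENNReal.ofReal |g x - ⨍ y in s, g y ∂μ| ≤ ENNReal.ofReal |g x - a| + A := by
    intro x
    calc ENNReal.ofReal |g x - ⨍ y in s, g y ∂μ|
        ≤ ENNReal.ofReal (|g x - a| + |(⨍ y in s, g y ∂μ) - a|) := by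
          gcongr; exact (abs_sub_le _ a _).trans_eq (by rw [abs_sub_comm a])
      _ ≤ ENNReal.ofReal |g x - a| + A := ENNReal.ofReal_add_le.trans (by gcongr)
  calc meanOsc μ s g ≤ (μ s)⁻¹ * ∫⁻ x in s, (ENNReal.ofReal |g x - a| + A) ∂μ := by
        unfold meanOsc; gcongr with x; exact hpt x
    _ = A + (μ s)⁻¹ * μ s * A := by
        rw [lintegral_add_right _ measurable_const, setLIntegral_const, mul_add, mul_comm A,
          mul_assoc]
    _ ≤ A + 1 * A := by gcongr; exact ENNReal.inv_mul_le_one _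
    _ = 2 * A := by rw [one_mul, two_mul]

theorem meanOsc_le_of_subset {s' : Set α} (hss : s' ⊆ s) (h0 : μ s' ≠ 0) (hs : μ s ≠ ∞)
    {g : α → ℝ} (hg : AEStronglyMeasurable g (μ.restrict s)) :
    meanOsc μ s' g ≤ 2 * ((μ s')⁻¹ * μ s) * meanOsc μ s g := by
  have hs0 : μ s ≠ 0 := fun h => h0 (measure_mono_null hss h)
  calc meanOsc μ s' g
      ≤ 2 * ((μ s')⁻¹ * ∫⁻ x in s', ENNReal.ofReal |g x - ⨍ y in s, g y ∂μ| ∂μ) :=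
        meanOsc_le_two_mul h0 (measure_ne_top_of_subset hss hs)
          (hg.mono_measure (Measure.restrict_mono hss le_rfl)) _
    _ ≤ 2 * ((μ s')⁻¹ * ∫⁻ x in s, ENNReal.ofReal |g x - ⨍ y in s, g y ∂μ| ∂μ) := by
        gcongr
    _ = 2 * ((μ s')⁻¹ * μ s) * meanOsc μ s g := by
        rw [meanOsc, mul_assoc 2, mul_assoc (μ s')⁻¹, ← mul_assoc (μ s),
          ENNReal.mul_inv_cancel hs0 hs, one_mul]

theorem meanOsc_congr_ae {g₁ g₂ : α → ℝ} (h : g₁ =ᵐ[μ.restrict s] g₂) :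
    meanOsc μ s g₁ = meanOsc μ s g₂ := by
  rw [meanOsc, meanOsc, average_congr h]
  congr 1
  exact lintegral_congr_ae (h.mono fun x hx => by dsimp only; rw [hx])

end MeanOscillation

section Rectangles

variable {d : ℕ} {n : Fin d → ℕ}

theorem cubeSet_eq_pi {m : ℕ} (Q : Cube m) :
    cubeSet Q = univ.pi fun k => Ico (Q.corner k) (Q.corner k + Q.side) := by
  ext x; simp [cubeSet, Set.mem_pi]

theorem measurableSet_cubeSet {m : ℕ} (Q : Cube m) : MeasurableSet (cubeSet Q) := by
  rw [cubeSet_eq_pi]; exact .univ_pi fun k => measurableSet_Ico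

theorem volume_cubeSet {m : ℕ} (Q : Cube m) : volume (cubeSet Q) = ENNReal.ofReal Q.side ^ m := by
  simp [cubeSet_eq_pi, volume_pi_pi, Real.volume_Ico]

theorem volume_cubeSet_pos {m : ℕ} (Q : Cube m) : 0 < volume (cubeSet Q) := by
  rw [volume_cubeSet]; exact ENNReal.pow_pos (ENNReal.ofReal_pos.2 Q.side_pos) m

theorem volume_cubeSet_ne_top {m : ℕ} (Q : Cube m) : volume (cubeSet Q) ≠ ∞ := by
  rw [volume_cubeSet]; exact pow_ne_top ofReal_ne_top

theorem rectSet_eq_pi (R : Rect n) : rectSet R = univ.pi fun i => cubeSet (R i) := by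
  ext x; simp [rectSet, Set.mem_pi]

theorem measurableSet_rectSet (R : Rect n) : MeasurableSet (rectSet R) := by
  rw [rectSet_eq_pi]; exact .univ_pi fun i => measurableSet_cubeSet _

theorem volume_rectSet (R : Rect n) : volume (rectSet R) = ∏ i, volume (cubeSet (R i)) := by
  rw [rectSet_eq_pi, volume_pi_pi]

theorem volume_rectSet_pos (R : Rect n) : 0 < volume (rectSet R) := by
  rw [volume_rectSet]; exact CanonicallyOrderedAdd.prod_pos.2 fun i _ => volume_cubeSet_pos _

theorem volume_rectSet_ne_top (R : Rect n) : volume (rectSet R) ≠ ∞ := by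
  rw [volume_rectSet]; exact ENNReal.prod_ne_top fun i _ => volume_cubeSet_ne_top _

theorem volume_rectSet_update_mul (R : Rect n) (i : Fin d) (Q : Cube (n i)) :
    volume (rectSet (update R i Q)) * volume (cubeSet (R i))
      = volume (rectSet R) * volume (cubeSet Q) := by
  simp only [volume_rectSet, apply_update (fun j (Q : Cube (n j)) => volume (cubeSet Q)),
    Finset.prod_update_of_mem (Finset.mem_univ i), Finset.sdiff_singleton_eq_erase,
    ← Finset.mul_prod_erase Finset.univ (fun j => volume (cubeSet (R j))) (Finset.mem_univ i)]
  ring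

theorem update_mem_rectSet_iff {R : Rect n} {i : Fin d} {x : ProductSpace n}
    {t : Fin (n i) → ℝ} :
    update x i t ∈ rectSet R ↔ t ∈ cubeSet (R i) ∧ ∀ j ≠ i, x j ∈ cubeSet (R j) := by
  refine ⟨fun h => ⟨by simpa using h i, fun j hj => by simpa [update_of_ne hj] using h j⟩,
    fun ⟨ht, hx⟩ j => ?_⟩
  rcases eq_or_ne j i with rfl | hj
  · simpa using ht
  · simpa [update_of_ne hj] using hx j hj

theorem indicator_rectSet_update {M : Type*} [Zero M] {R : Rect n} {i : Fin d}
    {x : ProductSpace n} (hx : ∀ j ≠ i, x j ∈ cubeSet (R j)) (Φ : ProductSpace n → M)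
    (t : Fin (n i) → ℝ) :
    (rectSet R).indicator Φ (update x i t)
      = (cubeSet (R i)).indicator (fun t => Φ (update x i t)) t := by
  have h : update x i t ∈ rectSet R ↔ t ∈ cubeSet (R i) :=
    update_mem_rectSet_iff.trans (and_iff_left hx)
  by_cases ht : t ∈ cubeSet (R i)
  · rw [indicator_of_mem (h.2 ht), indicator_of_mem ht]
  · rw [indicator_of_notMem (mt h.1 ht), indicator_of_notMem ht]

theorem indicator_rectSet_update_of_not {M : Type*} [Zero M] {R : Rect n} {i : Fin d}
    {x : ProductSpace n} (hx : ¬ ∀ j ≠ i, x j ∈ cubeSet (R j)) (Φ : ProductSpace n → M)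
    (t : Fin (n i) → ℝ) : (rectSet R).indicator Φ (update x i t) = 0 :=
  indicator_of_notMem (fun h => hx (update_mem_rectSet_iff.1 h).2) _

end Rectangles

section BlockFubini

theorem lintegral_eq_of_forall_lintegral_update_eq {ι : Type*} [Fintype ι] [DecidableEq ι]
    {X : ι → Type*} [∀ i, MeasurableSpace (X i)] {μ : ∀ i, Measure (X i)}
    [∀ i, SigmaFinite (μ i)] (i : ι) {F G : (∀ i, X i) → ℝ≥0∞} (hF : Measurable F)
    (hG : Measurable G) (h : ∀ x, ∫⁻ t, F (update x i t) ∂μ i = ∫⁻ t, G (update x i t) ∂μ i) :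
    ∫⁻ x, F x ∂Measure.pi μ = ∫⁻ x, G x ∂Measure.pi μ :=
  lintegral_eq_of_lmarginal_eq {i} hF hG (by simpa only [lmarginal_singleton] using funext h)

variable {d : ℕ} {n : Fin d → ℕ}

theorem setLIntegral_rectSet_lintegral_update (R : Rect n) (i : Fin d) (Q : Cube (n i))
    {H : ProductSpace n → ℝ≥0∞} (hH : Measurable H) :
    ∫⁻ x in rectSet R, ∫⁻ t in cubeSet Q, H (update x i t)
      = volume (cubeSet (R i)) * ∫⁻ x in rectSet (update R i Q), H x := by
  have hΨ : Measurable fun x => ∫⁻ t in cubeSet Q, H (update x i t) :=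
    (hH.comp measurable_update').lintegral_prod_right'
  rw [← lintegral_indicator (measurableSet_rectSet R),
    ← lintegral_indicator (measurableSet_rectSet _),
    ← lintegral_const_mul _ (hH.indicator (measurableSet_rectSet _))]
  refine lintegral_eq_of_forall_lintegral_update_eq (μ := fun _ => volume) i
    (hΨ.indicator (measurableSet_rectSet R)) ((hH.indicator (measurableSet_rectSet _)).const_mul _)
    fun x => ?_
  -- Along the `i`-th slice through `x` both sides integrate to `|R i| ∫_Q H (update x i ·)`,
  -- or both to `0` if some other block of `x` leaves `R`.
  by_cases hx : ∀ j ≠ i, x j ∈ cubeSet (R j)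
  · have hx' : ∀ j ≠ i, x j ∈ cubeSet (update R i Q j) := fun j hj => by
      simpa [update_of_ne hj] using hx j hj
    simp only [indicator_rectSet_update hx, indicator_rectSet_update hx', update_idem, update_self]
    rw [lintegral_indicator (measurableSet_cubeSet _), setLIntegral_const,
      lintegral_const_mul' _ _ (volume_cubeSet_ne_top _),
      lintegral_indicator (measurableSet_cubeSet _), mul_comm]
  · have hx' : ¬ ∀ j ≠ i, x j ∈ cubeSet (update R i Q j) := fun h => hx fun j hj => by
      simpa [update_of_ne hj] using h j hj
    simp [indicator_rectSet_update_of_not hx, indicator_rectSet_update_of_not hx']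

end BlockFubini

section Differentiation

open Metric Topology

variable {d : ℕ} {n : Fin d → ℕ}

def ballRect (x : ProductSpace n) {r : ℝ} (hr : 0 < r) : Rect n :=
  fun j => ⟨fun k => x j k - r, 2 * r, by linarith⟩

theorem rectSet_ballRect_ae_eq (x : ProductSpace n) {r : ℝ} (hr : 0 < r) :
    rectSet (ballRect x hr) =ᵐ[volume] closedBall x r := by
  rw [rectSet_eq_pi, closedBall_pi _ hr.le]
  refine Measure.ae_eq_set_pi fun j _ => ?_
  rw [cubeSet_eq_pi, closedBall_pi _ hr.le]
  refine Measure.ae_eq_set_pi fun k _ => ?_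
  rw [Real.closedBall_eq_Icc]
  show Ico (x j k - r) (x j k - r + 2 * r) =ᵐ[volume] _
  rw [show x j k - r + 2 * r = x j k + r by ring]
  exact Ico_ae_eq_Icc

theorem rectSet_ballRect_mem_nhds (x : ProductSpace n) {r : ℝ} (hr : 0 < r) :
    rectSet (ballRect x hr) ∈ 𝓝 x := by
  refine mem_of_superset (ball_mem_nhds x hr) fun y hy j k => ?_
  have h := (dist_le_pi_dist (y j) (x j) k).trans_lt ((dist_le_pi_dist y x j).trans_lt hy)
  rw [Real.dist_eq, abs_lt] at h
  constructor <;> simp only [ballRect] <;> linarith [h.1, h.2]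

/-- Besicovitch differentiation, since closed sup-metric balls are rectangles up to null sets. -/
theorem ae_le_of_forall_setLIntegral_rectSet_le {Φ : ProductSpace n → ℝ≥0∞}
    (hΦ : Measurable Φ) {B : ℝ≥0∞}
    (h : ∀ R : Rect n, ∫⁻ x in rectSet R, Φ x ≤ B * volume (rectSet R)) :
    ∀ᵐ x, Φ x ≤ B := by
  rcases eq_or_ne B ∞ with rfl | hB
  · exact ae_of_all _ fun _ => le_top
  set ρ := volume.withDensity Φ
  have hρ : ∀ s, MeasurableSet s → ρ s = ∫⁻ x in s, Φ x := fun s hs => withDensity_apply Φ hs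
  have : IsLocallyFiniteMeasure ρ := ⟨fun x => ⟨_, rectSet_ballRect_mem_nhds x one_pos, by
    rw [hρ _ (measurableSet_rectSet _)]
    exact (h _).trans_lt (mul_lt_top hB.lt_top (volume_rectSet_ne_top _).lt_top)⟩⟩
  filter_upwards [Measure.rnDeriv_withDensity volume hΦ,
    Besicovitch.ae_tendsto_rnDeriv ρ volume] with x hx hlim
  rw [hx] at hlim
  refine le_of_tendsto hlim (eventually_nhdsWithin_of_forall fun r (hr : 0 < r) => ?_)
  refine ENNReal.div_le_of_le_mul ?_
  rw [hρ _ measurableSet_closedBall, ← setLIntegral_congr (rectSet_ballRect_ae_eq x hr),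
    ← measure_congr (rectSet_ballRect_ae_eq x hr)]
  exact h _

end Differentiation

section Slices

variable {d : ℕ} {n : Fin d → ℕ}

def slice (i : Fin d) (f : ProductSpace n → ℝ) (x : ProductSpace n) : (Fin (n i) → ℝ) → ℝ :=
  fun t => f (update x i t)

theorem slice_update (i : Fin d) (f : ProductSpace n → ℝ) (x : ProductSpace n)
    (t : Fin (n i) → ℝ) : slice i f (update x i t) = slice i f x := by
  funext s; simp only [slice, update_idem]

theorem measurable_slice {f : ProductSpace n → ℝ} (hf : Measurable f) (i : Fin d)
    (x : ProductSpace n) : Measurable (slice i f x) :=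
  hf.comp (measurable_update x)

noncomputable def sliceMean (i : Fin d) (Q : Cube (n i)) (f : ProductSpace n → ℝ)
    (x : ProductSpace n) : ℝ :=
  ⨍ t in cubeSet Q, slice i f x t

theorem sliceMean_update (i : Fin d) (Q : Cube (n i)) (f : ProductSpace n → ℝ)
    (x : ProductSpace n) (t : Fin (n i) → ℝ) :
    sliceMean i Q f (update x i t) = sliceMean i Q f x := by
  rw [sliceMean, slice_update, sliceMean]

theorem measurable_sliceMean {f : ProductSpace n → ℝ} (hf : Measurable f) (i : Fin d)
    (Q : Cube (n i)) : Measurable (sliceMean i Q f) := by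
  have h := (hf.comp measurable_update').stronglyMeasurable.integral_prod_right'
    (ν := volume.restrict (cubeSet Q)) (f := fun p : ProductSpace n × (Fin (n i) → ℝ) =>
      f (update p.1 i p.2))
  have heq : sliceMean i Q f
      = fun x => (volume.real (cubeSet Q))⁻¹ * ∫ t in cubeSet Q, f (update x i t) :=
    funext fun x => by rw [sliceMean, setAverage_eq, smul_eq_mul]; rfl
  exact heq ▸ h.measurable.const_mul _

theorem measurable_meanOsc_slice {f : ProductSpace n → ℝ} (hf : Measurable f) (i : Fin d)
    (Q : Cube (n i)) : Measurable fun x => meanOsc volume (cubeSet Q) (slice i f x) :=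
  .const_mul (Measurable.lintegral_prod_right' (f := fun p : ProductSpace n × (Fin (n i) → ℝ) =>
    ENNReal.ofReal |f (update p.1 i p.2) - sliceMean i Q f p.1|)
    (((hf.comp measurable_update').sub
      ((measurable_sliceMean hf i Q).comp measurable_fst)).abs.ennreal_ofReal)) _

end Slices

section SliceBoundedByLittleBMO

variable {d : ℕ} {n : Fin d → ℕ}

theorem meanOsc_le_bmo1 (f : ProductSpace n → ℝ) (R : Rect n) :
    meanOsc volume (rectSet R) f ≤ bmo1 f :=
  le_iSup (fun R => meanOsc volume (rectSet R) f) R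

theorem meanOsc_le_bmo1Cube {m : ℕ} (g : (Fin m → ℝ) → ℝ) (Q : Cube m) :
    meanOsc volume (cubeSet Q) g ≤ bmo1Cube g :=
  le_iSup (fun Q => meanOsc volume (cubeSet Q) g) Q

/-- Compare each slice with the average of `f` over `R` with its `i`-th side replaced by `Q`. -/
theorem setLIntegral_meanOsc_slice_le {f : ProductSpace n → ℝ} (hf : Measurable f) (i : Fin d)
    (Q : Cube (n i)) (R : Rect n) :
    ∫⁻ x in rectSet R, meanOsc volume (cubeSet Q) (slice i f x)
      ≤ 2 * bmo1 f * volume (rectSet R) := by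
  set R' := update R i Q
  set a := ⨍ y in rectSet R', f y
  have hQ0 := (volume_cubeSet_pos Q).ne'
  have hQt := volume_cubeSet_ne_top Q
  have hH : Measurable fun y => ENNReal.ofReal |f y - a| := by fun_prop
  calc ∫⁻ x in rectSet R, meanOsc volume (cubeSet Q) (slice i f x)
      ≤ ∫⁻ x in rectSet R, 2 * (volume (cubeSet Q))⁻¹ *
          ∫⁻ t in cubeSet Q, ENNReal.ofReal |f (update x i t) - a| := by
        refine lintegral_mono fun x => ?_
        rw [mul_assoc]
        exact meanOsc_le_two_mul hQ0 hQt (measurable_slice hf i x).aestronglyMeasurable a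
    _ = 2 * (volume (cubeSet Q))⁻¹ *
          (volume (cubeSet (R i)) * (volume (rectSet R') * meanOsc volume (rectSet R') f)) := by
        rw [lintegral_const_mul' _ _ (mul_ne_top ofNat_ne_top (inv_ne_top.2 hQ0)),
          setLIntegral_rectSet_lintegral_update R i Q hH,
          mul_meanOsc (volume_rectSet_pos R').ne' (volume_rectSet_ne_top R')]
    _ ≤ 2 * (volume (cubeSet Q))⁻¹ *
          (volume (cubeSet (R i)) * (volume (rectSet R') * bmo1 f)) := by
        gcongr; exact meanOsc_le_bmo1 f R'
    _ = 2 * bmo1 f * (volume (cubeSet Q))⁻¹ * (volume (rectSet R') * volume (cubeSet (R i))) := by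
        ring
    _ = 2 * bmo1 f * ((volume (cubeSet Q))⁻¹ * volume (cubeSet Q)) * volume (rectSet R) := by
        rw [volume_rectSet_update_mul]; ring
    _ = 2 * bmo1 f * volume (rectSet R) := by rw [ENNReal.inv_mul_cancel hQ0 hQt, mul_one]

theorem ae_meanOsc_slice_le {f : ProductSpace n → ℝ} (hf : Measurable f) (i : Fin d)
    (Q : Cube (n i)) : ∀ᵐ x, meanOsc volume (cubeSet Q) (slice i f x) ≤ 2 * bmo1 f :=
  ae_le_of_forall_setLIntegral_rectSet_le (measurable_meanOsc_slice hf i Q)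
    (setLIntegral_meanOsc_slice_le hf i Q)

def ratCube (m : ℕ) (c : Fin m → ℚ) (s : {q : ℚ // 0 < q}) : Cube m :=
  ⟨fun k => c k, s, by exact_mod_cast s.2⟩

theorem exists_ratCube_superset {m : ℕ} (Q : Cube m) :
    ∃ c s, cubeSet Q ⊆ cubeSet (ratCube m c s) ∧
      volume (cubeSet (ratCube m c s)) ≤ 2 ^ m * volume (cubeSet Q) := by
  have hQ := Q.side_pos
  obtain ⟨s, hs₁, hs₂⟩ := exists_rat_btwn (show Q.side < 2 * Q.side by linarith)
  have hc : ∀ k, ∃ c : ℚ, Q.corner k + Q.side - s < c ∧ (c : ℝ) < Q.corner k :=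
    fun k => exists_rat_btwn (by linarith)
  choose c hc₁ hc₂ using hc
  refine ⟨c, ⟨s, by exact_mod_cast hQ.trans hs₁⟩, fun x hx k => ?_, ?_⟩
  · have := hx k
    constructor <;> simp only [ratCube] <;> linarith [this.1, this.2, hc₁ k, hc₂ k]
  · calc volume (cubeSet (ratCube m c _)) ≤ ENNReal.ofReal (2 * Q.side) ^ m := by
          rw [volume_cubeSet]; gcongr; exact hs₂.le
      _ = 2 ^ m * volume (cubeSet Q) := by
          rw [volume_cubeSet, ENNReal.ofReal_mul zero_le_two, mul_pow, ENNReal.ofReal_ofNat]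

/-- Only countably many cubes are handled a.e. at once: the rational ones, which dominate all
cubes up to the factor `2 ^ nᵢ`. -/
theorem ae_bmo1Cube_slice_le_of_measurable {f : ProductSpace n → ℝ} (hf : Measurable f)
    (i : Fin d) : ∀ᵐ x, bmo1Cube (slice i f x) ≤ 2 ^ (n i + 2) * bmo1 f := by
  have hrat : ∀ᵐ x, ∀ c s,
      meanOsc volume (cubeSet (ratCube (n i) c s)) (slice i f x) ≤ 2 * bmo1 f := by
    simp only [ae_all_iff]
    exact fun c s => ae_meanOsc_slice_le hf i _
  filter_upwards [hrat] with x hx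
  refine iSup_le fun Q => ?_
  obtain ⟨c, s, hsub, hvol⟩ := exists_ratCube_superset Q
  have hQ0 := (volume_cubeSet_pos Q).ne'
  have hratio : (volume (cubeSet Q))⁻¹ * volume (cubeSet (ratCube (n i) c s)) ≤ 2 ^ n i :=
    calc _ ≤ (volume (cubeSet Q))⁻¹ * (2 ^ n i * volume (cubeSet Q)) := by gcongr
      _ = 2 ^ n i := by rw [mul_left_comm, ENNReal.inv_mul_cancel hQ0 (volume_cubeSet_ne_top Q),
          mul_one]
  calc meanOsc volume (cubeSet Q) (slice i f x)
      ≤ 2 * ((volume (cubeSet Q))⁻¹ * volume (cubeSet (ratCube (n i) c s))) *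
          meanOsc volume (cubeSet (ratCube (n i) c s)) (slice i f x) :=
        meanOsc_le_of_subset hsub hQ0 (volume_cubeSet_ne_top _)
          (measurable_slice hf i x).aestronglyMeasurable
    _ ≤ 2 * 2 ^ n i * (2 * bmo1 f) := by gcongr; exact hx c s
    _ = 2 ^ (n i + 2) * bmo1 f := by ring

end SliceBoundedByLittleBMO

theorem eq_of_forall_update_eq {ι β : Type*} [Fintype ι] [DecidableEq ι] {X : ι → Type*}
    {F : (∀ i, X i) → β} (h : ∀ x i t, F (update x i t) = F x) (x y : ∀ i, X i) : F x = F y := by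
  have key : ∀ s : Finset ι, F (s.piecewise y x) = F x := by
    intro s
    induction s using Finset.induction_on with
    | empty => simp
    | insert a s _ ih => rw [Finset.piecewise_insert, h, ih]
  simpa using (key Finset.univ).symm

section LittleBMOBoundedBySlices

variable {d : ℕ} {n : Fin d → ℕ}

theorem setLIntegral_abs_sub_sliceMean_le {f : ProductSpace n → ℝ} (hf : Measurable f)
    (R : Rect n) (i : Fin d) {C : ℝ≥0∞}
    (hC : ∀ᵐ x, meanOsc volume (cubeSet (R i)) (slice i f x) ≤ C) :
    ∫⁻ x in rectSet R, ENNReal.ofReal |f x - sliceMean i (R i) f x| ≤ C * volume (rectSet R) := by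
  have hQ0 := (volume_cubeSet_pos (R i)).ne'
  have hQt := volume_cubeSet_ne_top (R i)
  have hH : Measurable fun y => ENNReal.ofReal |f y - sliceMean i (R i) f y| :=
    (hf.sub (measurable_sliceMean hf i (R i))).abs.ennreal_ofReal
  have hself := setLIntegral_rectSet_lintegral_update R i (R i) hH
  rw [update_eq_self] at hself
  refine (ENNReal.mul_le_mul_iff_right hQ0 hQt).1 ?_
  calc volume (cubeSet (R i)) * ∫⁻ x in rectSet R, ENNReal.ofReal |f x - sliceMean i (R i) f x|
      = ∫⁻ x in rectSet R,
          volume (cubeSet (R i)) * meanOsc volume (cubeSet (R i)) (slice i f x) := by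
        rw [← hself]
        simp only [sliceMean_update, mul_meanOsc hQ0 hQt]
        rfl
    _ ≤ ∫⁻ _ in rectSet R, volume (cubeSet (R i)) * C :=
        lintegral_mono_ae (ae_restrict_of_ae (hC.mono fun x hx => by gcongr))
    _ = volume (cubeSet (R i)) * (C * volume (rectSet R)) := by
        rw [setLIntegral_const, mul_assoc]

theorem setLIntegral_abs_sliceMean_sub_le {g₁ g₂ : ProductSpace n → ℝ} (hg₁ : Measurable g₁)
    (hg₂ : Measurable g₂) (R : Rect n) (i : Fin d) :
    ∫⁻ x in rectSet R, ENNReal.ofReal |sliceMean i (R i) g₁ x - sliceMean i (R i) g₂ x|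
      ≤ ∫⁻ x in rectSet R, ENNReal.ofReal |g₁ x - g₂ x| := by
  have hQ0 := (volume_cubeSet_pos (R i)).ne'
  have hQt := volume_cubeSet_ne_top (R i)
  have hH : Measurable fun y => ENNReal.ofReal |g₁ y - g₂ y| := by fun_prop
  calc ∫⁻ x in rectSet R, ENNReal.ofReal |sliceMean i (R i) g₁ x - sliceMean i (R i) g₂ x|
      ≤ ∫⁻ x in rectSet R, (volume (cubeSet (R i)))⁻¹ *
          ∫⁻ t in cubeSet (R i), ENNReal.ofReal |g₁ (update x i t) - g₂ (update x i t)| :=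
        lintegral_mono fun x => ofReal_abs_setAverage_sub_le hQt
          (measurable_slice hg₁ i x).aestronglyMeasurable
          (measurable_slice hg₂ i x).aestronglyMeasurable
    _ = ∫⁻ x in rectSet R, ENNReal.ofReal |g₁ x - g₂ x| := by
        rw [lintegral_const_mul' _ _ (inv_ne_top.2 hQ0),
          setLIntegral_rectSet_lintegral_update R i (R i) hH, update_eq_self, ← mul_assoc,
          ENNReal.inv_mul_cancel hQ0 hQt, one_mul]

noncomputable def iterSliceMean (R : Rect n) :
    List (Fin d) → (ProductSpace n → ℝ) → ProductSpace n → ℝ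
  | [], f => f
  | i :: l, f => sliceMean i (R i) (iterSliceMean R l f)

theorem measurable_iterSliceMean (R : Rect n) (l : List (Fin d)) {f : ProductSpace n → ℝ}
    (hf : Measurable f) : Measurable (iterSliceMean R l f) := by
  induction l with
  | nil => exact hf
  | cons i l ih => exact measurable_sliceMean ih i (R i)

theorem iterSliceMean_update (R : Rect n) {l : List (Fin d)} (f : ProductSpace n → ℝ) {j : Fin d}
    (hj : j ∈ l) (x : ProductSpace n) (t : Fin (n j) → ℝ) :
    iterSliceMean R l f (update x j t) = iterSliceMean R l f x := by
  induction l generalizing x with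
  | nil => cases hj
  | cons i l ih =>
    rcases eq_or_ne j i with rfl | hji
    · exact sliceMean_update j (R j) _ x t
    · simp only [iterSliceMean, sliceMean, slice, update_comm hji,
        ih ((List.mem_cons.1 hj).resolve_left hji)]

theorem setLIntegral_abs_sub_iterSliceMean_le {f : ProductSpace n → ℝ} (hf : Measurable f)
    (R : Rect n) {C : ℝ≥0∞} (hC : ∀ i, ∀ᵐ x, bmo1Cube (slice i f x) ≤ C) (l : List (Fin d)) :
    ∫⁻ x in rectSet R, ENNReal.ofReal |f x - iterSliceMean R l f x|
      ≤ l.length * (C * volume (rectSet R)) := by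
  induction l with
  | nil => simp [iterSliceMean]
  | cons i l ih =>
    set F := iterSliceMean R l f
    have hF : Measurable F := measurable_iterSliceMean R l hf
    have hm : Measurable fun x => ENNReal.ofReal |f x - sliceMean i (R i) f x| :=
      (hf.sub (measurable_sliceMean hf i (R i))).abs.ennreal_ofReal
    have hpt : ∀ x, ENNReal.ofReal |f x - sliceMean i (R i) F x|
        ≤ ENNReal.ofReal |f x - sliceMean i (R i) f x|
          + ENNReal.ofReal |sliceMean i (R i) f x - sliceMean i (R i) F x| := fun x =>
      (ENNReal.ofReal_le_ofReal (abs_sub_le _ _ _)).trans ENNReal.ofReal_add_le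
    calc ∫⁻ x in rectSet R, ENNReal.ofReal |f x - sliceMean i (R i) F x|
        ≤ (∫⁻ x in rectSet R, ENNReal.ofReal |f x - sliceMean i (R i) f x|)
          + ∫⁻ x in rectSet R, ENNReal.ofReal |sliceMean i (R i) f x - sliceMean i (R i) F x| :=
          (lintegral_mono hpt).trans_eq (lintegral_add_left hm _)
      _ ≤ C * volume (rectSet R) + l.length * (C * volume (rectSet R)) := by
          gcongr
          · exact setLIntegral_abs_sub_sliceMean_le hf R i
              ((hC i).mono fun x hx => (meanOsc_le_bmo1Cube _ _).trans hx)
          · exact (setLIntegral_abs_sliceMean_sub_le hf hF R i).trans ih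
      _ = (i :: l).length * (C * volume (rectSet R)) := by
          rw [List.length_cons]; push_cast; ring

/-- After averaging in every block the function is constant on `R`, so telescoping over the
blocks compares `f` with a constant. -/
theorem bmo1_le_of_ae_bmo1Cube_slice_le_of_measurable {f : ProductSpace n → ℝ}
    (hf : Measurable f) {C : ℝ≥0∞}
    (hC : ∀ i, ∀ᵐ x, bmo1Cube (slice i f x) ≤ C) : bmo1 f ≤ 2 * d * C := by
  refine iSup_le fun R => ?_
  have h0 := (volume_rectSet_pos R).ne'
  have ht := volume_rectSet_ne_top R
  set b := iterSliceMean R (List.finRange d) f 0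
  have hb : ∀ x, iterSliceMean R (List.finRange d) f x = b :=
    fun x => eq_of_forall_update_eq
      (fun x j t => iterSliceMean_update R f (List.mem_finRange j) x t) x 0
  calc meanOsc volume (rectSet R) f
      ≤ 2 * ((volume (rectSet R))⁻¹ * ∫⁻ x in rectSet R, ENNReal.ofReal |f x - b|) :=
        meanOsc_le_two_mul h0 ht hf.aestronglyMeasurable b
    _ ≤ 2 * ((volume (rectSet R))⁻¹ * (d * (C * volume (rectSet R)))) := by
        gcongr
        simpa only [hb, List.length_finRange] using
          setLIntegral_abs_sub_iterSliceMean_le hf R hC (List.finRange d)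
    _ = 2 * d * C * ((volume (rectSet R))⁻¹ * volume (rectSet R)) := by ring
    _ = 2 * d * C := by rw [ENNReal.inv_mul_cancel h0 ht, mul_one]

end LittleBMOBoundedBySlices

section AlmostEverywhereRepresentatives

variable {d : ℕ} {n : Fin d → ℕ}

theorem iUnion_cubeSet_ratCube (m : ℕ) : ⋃ (c) (s), cubeSet (ratCube m c s) = univ := by
  refine eq_univ_of_forall fun t => ?_
  obtain ⟨c, s, hsub, -⟩ := exists_ratCube_superset ⟨t, 1, one_pos⟩
  exact mem_iUnion₂.2 ⟨c, s, hsub fun k => ⟨le_rfl, lt_add_one _⟩⟩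

theorem ae_slice_ae_eq {f g : ProductSpace n → ℝ} (h : f =ᵐ[volume] g) (i : Fin d) :
    ∀ᵐ x, slice i f x =ᵐ[volume] slice i g x := by
  obtain ⟨N, hfgN, hN, hN0⟩ := exists_measurable_superset_of_null (ae_iff.1 h)
  have hNi : Measurable (N.indicator (1 : ProductSpace n → ℝ≥0∞)) := measurable_one.indicator hN
  have hcube : ∀ Q : Cube (n i), ∀ᵐ x, ∫⁻ t in cubeSet Q, N.indicator 1 (update x i t) ≤ 0 :=
    fun Q => ae_le_of_forall_setLIntegral_rectSet_le
      (Φ := fun x => ∫⁻ t in cubeSet Q, N.indicator 1 (update x i t))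
      (hNi.comp measurable_update').lintegral_prod_right' fun R => by
        rw [setLIntegral_rectSet_lintegral_update R i Q hNi, zero_mul,
          le_zero_iff.1 ((setLIntegral_le_lintegral _ _).trans_eq
            ((lintegral_indicator_one hN).trans hN0)), mul_zero]
  have hrat : ∀ᵐ x, ∀ c s,
      ∫⁻ t in cubeSet (ratCube (n i) c s), N.indicator 1 (update x i t) ≤ 0 := by
    simp only [ae_all_iff]
    exact fun c s => hcube _
  filter_upwards [hrat] with x hx
  rw [EventuallyEq, ← Measure.restrict_univ (μ := (volume : Measure (Fin (n i) → ℝ))),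
    ← iUnion_cubeSet_ratCube, ae_restrict_iUnion_iff]
  refine fun c => (ae_restrict_iUnion_iff _ _).2 fun s => ?_
  filter_upwards [(lintegral_eq_zero_iff (hNi.comp (measurable_update x))).1
    (le_zero_iff.1 (hx c s))] with t ht
  by_contra hne
  simp [indicator_of_mem (hfgN hne)] at ht

theorem bmo1_congr_ae {f g : ProductSpace n → ℝ} (h : f =ᵐ[volume] g) : bmo1 f = bmo1 g :=
  iSup_congr fun _ => meanOsc_congr_ae (ae_restrict_of_ae h)

theorem bmo1Cube_congr_ae {m : ℕ} {g₁ g₂ : (Fin m → ℝ) → ℝ} (h : g₁ =ᵐ[volume] g₂) :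
    bmo1Cube g₁ = bmo1Cube g₂ :=
  iSup_congr fun _ => meanOsc_congr_ae (ae_restrict_of_ae h)

theorem ae_bmo1Cube_slice_congr {f g : ProductSpace n → ℝ} (h : f =ᵐ[volume] g) (i : Fin d) :
    ∀ᵐ x, bmo1Cube (slice i f x) = bmo1Cube (slice i g x) :=
  (ae_slice_ae_eq h i).mono fun _ hx => bmo1Cube_congr_ae hx

theorem ae_bmo1Cube_slice_le {f : ProductSpace n → ℝ} (hf : AEStronglyMeasurable f volume)
    (i : Fin d) : ∀ᵐ x, bmo1Cube (slice i f x) ≤ 2 ^ (n i + 2) * bmo1 f := by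
  filter_upwards [ae_bmo1Cube_slice_le_of_measurable hf.stronglyMeasurable_mk.measurable i,
    ae_bmo1Cube_slice_congr hf.ae_eq_mk i] with x hx hfx
  rwa [hfx, bmo1_congr_ae hf.ae_eq_mk]

theorem bmo1_le_of_ae_bmo1Cube_slice_le {f : ProductSpace n → ℝ}
    (hf : AEStronglyMeasurable f volume) {C : ℝ≥0∞}
    (hC : ∀ i, ∀ᵐ x, bmo1Cube (slice i f x) ≤ C) : bmo1 f ≤ 2 * d * C := by
  rw [bmo1_congr_ae hf.ae_eq_mk]
  refine bmo1_le_of_ae_bmo1Cube_slice_le_of_measurable hf.stronglyMeasurable_mk.measurable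
    fun i => ?_
  filter_upwards [hC i, ae_bmo1Cube_slice_congr hf.ae_eq_mk i] with x hx hfx
  rwa [← hfx]

end AlmostEverywhereRepresentatives

theorem statement13_general {d : ℕ} (n : Fin d → ℕ) :
    ∃ c > (0 : ℝ), ∀ f : ProductSpace n → ℝ, LocallyIntegrable f volume →
      ((bmo1 f ≠ ⊤ ↔ ∃ C : ℝ, 0 ≤ C ∧ ∀ i : Fin d,
          ∀ᵐ x ∂(volume : Measure (ProductSpace n)),
            bmo1Cube (fun t => f (Function.update x i t)) ≤ ENNReal.ofReal C) ∧
        (∀ i : Fin d, ∀ᵐ x ∂(volume : Measure (ProductSpace n)),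
          bmo1Cube (fun t => f (Function.update x i t)) ≤ ENNReal.ofReal c * bmo1 f) ∧
        (∀ C : ℝ, 0 ≤ C →
          (∀ i : Fin d, ∀ᵐ x ∂(volume : Measure (ProductSpace n)),
            bmo1Cube (fun t => f (Function.update x i t)) ≤ ENNReal.ofReal C) →
          bmo1 f ≤ ENNReal.ofReal (c * C))) := by
  set M := Finset.univ.sup n
  set c : ℝ := 2 ^ (M + 2) + 2 * d
  have hc : 0 < c := by positivity
  have hc' : ENNReal.ofReal c = 2 ^ (M + 2) + 2 * d := by
    rw [ENNReal.ofReal_add (by positivity) (by positivity), ENNReal.ofReal_mul zero_le_two,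
      ENNReal.ofReal_pow zero_le_two, ENNReal.ofReal_ofNat, ENNReal.ofReal_natCast]
  have hc₁ (i : Fin d) : (2 : ℝ≥0∞) ^ (n i + 2) ≤ ENNReal.ofReal c :=
    hc' ▸ le_add_right (pow_le_pow_right₀ one_le_two
      (by gcongr; exact Finset.le_sup (Finset.mem_univ i)))
  have hc₂ : 2 * (d : ℝ≥0∞) ≤ ENNReal.ofReal c := hc' ▸ le_add_self
  refine ⟨c, hc, fun f hf => ?_⟩
  have hslice : ∀ i, ∀ᵐ x, bmo1Cube (slice i f x) ≤ ENNReal.ofReal c * bmo1 f := fun i =>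
    (ae_bmo1Cube_slice_le hf.aestronglyMeasurable i).mono fun _ hx =>
      hx.trans (mul_le_mul_left (hc₁ i) _)
  have hbmo : ∀ C : ℝ, 0 ≤ C → (∀ i, ∀ᵐ x, bmo1Cube (slice i f x) ≤ ENNReal.ofReal C) →
      bmo1 f ≤ ENNReal.ofReal (c * C) := fun C _ hC =>
    (bmo1_le_of_ae_bmo1Cube_slice_le hf.aestronglyMeasurable hC).trans
      (by rw [ENNReal.ofReal_mul hc.le]; exact mul_le_mul_left hc₂ _)
  refine ⟨⟨fun hne => ⟨c * (bmo1 f).toReal, by positivity, fun i => ?_⟩,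
    fun ⟨C, hC, hCs⟩ => ne_top_of_le_ne_top ofReal_ne_top (hbmo C hC hCs)⟩, hslice, hbmo⟩
  refine (hslice i).mono fun x hx => hx.trans_eq ?_
  rw [ENNReal.ofReal_mul hc.le, ENNReal.ofReal_toReal hne]

/-- a locally integrable `f` has finite little `bmo` norm iff for every
block `i` and a.e. choice of the remaining variables, the one-variable function
`t ↦ f(…,t,…)` has one-parameter `BMO(ℝ^{nᵢ})` norm at most some constant `C`;
moreover the least such `C` and `‖f‖_bmo` are equivalent, with constants depending
only on `d`. -/
theorem statement13 {d : ℕ} (hd : 1 ≤ d) (n : Fin d → ℕ) (hn : ∀ i, 1 ≤ n i) :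
    ∃ c > (0 : ℝ), ∀ f : ProductSpace n → ℝ, LocallyIntegrable f volume →
      ((bmo1 f ≠ ⊤ ↔ ∃ C : ℝ, 0 ≤ C ∧ ∀ i : Fin d,
          ∀ᵐ x ∂(volume : Measure (ProductSpace n)),
            bmo1Cube (fun t => f (Function.update x i t)) ≤ ENNReal.ofReal C) ∧
        (∀ i : Fin d, ∀ᵐ x ∂(volume : Measure (ProductSpace n)),
          bmo1Cube (fun t => f (Function.update x i t)) ≤ ENNReal.ofReal c * bmo1 f) ∧
        (∀ C : ℝ, 0 ≤ C →
          (∀ i : Fin d, ∀ᵐ x ∂(volume : Measure (ProductSpace n)),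
            bmo1Cube (fun t => f (Function.update x i t)) ≤ ENNReal.ofReal C) →
          bmo1 f ≤ ENNReal.ofReal (c * C))) :=
  statement13_general n
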